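/- Let G₆,₆ be the 6-dimensional real Lie algebra with basis x₁,…,x₆ and nonzero brackets [x₁,x₂]=x₄, [x₂,x₃]=x₆, [x₂,x₄]=x₅. Define J by J x₁ = x₂, J x₂ = −x₁, J x₃ = x₄, J x₄ = −x₃, J x₅ = −x₆, J x₆ = x₅. Then J² = −1 and J satisfies the Nijenhuis integrability condition [JX,JY] − [X,Y] − J[JX,Y] − J[X,JY] = 0 for all X,Y. -/

import Mathlib

/-!
The Nijenhuis tensor `N` of `J` is skew and, once `J² = -1`, satisfies `N (J X) Y = -J (N X Y)`.
So `N` vanishes as soon as it vanishes on pairs from a set `s` such that `s ∪ J s` spans; for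
`s = {x 0, x 2, x 5}` this leaves three bracket computations.
-/

section Nijenhuis

variable {R L : Type*} [CommRing R] [LieRing L] [LieAlgebra R L] (J : L →ₗ[R] L)

def nijenhuis : L →ₗ[R] L →ₗ[R] L :=
  LinearMap.mk₂ R (fun X Y => ⁅J X, J Y⁆ - ⁅X, Y⁆ - J ⁅J X, Y⁆ - J ⁅X, J Y⁆)
    (fun X X' Y => by simp only [map_add, add_lie]; abel)
    (fun c X Y => by simp only [map_smul, smul_lie, smul_sub])
    (fun X Y Y' => by simp only [map_add, lie_add]; abel)
    (fun c X Y => by simp only [map_smul, lie_smul, smul_sub])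

theorem nijenhuis_apply (X Y : L) :
    nijenhuis J X Y = ⁅J X, J Y⁆ - ⁅X, Y⁆ - J ⁅J X, Y⁆ - J ⁅X, J Y⁆ :=
  rfl

theorem nijenhuis_swap (X Y : L) : nijenhuis J Y X = -nijenhuis J X Y := by
  rw [nijenhuis_apply, nijenhuis_apply, ← lie_skew (J Y) (J X), ← lie_skew Y X,
    ← lie_skew (J Y) X, ← lie_skew Y (J X), map_neg, map_neg]
  abel

theorem nijenhuis_self (X : L) : nijenhuis J X X = 0 := by
  rw [nijenhuis_apply, ← lie_skew (J X) X, map_neg, lie_self, lie_self]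
  abel

variable {J}

theorem nijenhuis_apply_left (hJ : ∀ X, J (J X) = -X) (X Y : L) :
    nijenhuis J (J X) Y = -J (nijenhuis J X Y) := by
  simp only [nijenhuis_apply, hJ, map_sub, neg_lie, map_neg]
  abel

theorem nijenhuis_apply_right (hJ : ∀ X, J (J X) = -X) (X Y : L) :
    nijenhuis J X (J Y) = -J (nijenhuis J X Y) := by
  rw [nijenhuis_swap, nijenhuis_apply_left hJ, nijenhuis_swap J Y X, map_neg]

theorem nijenhuis_eq_zero_of_span (hJ : ∀ X, J (J X) = -X) {s : Set L}
    (hs : Submodule.span R (s ∪ J '' s) = ⊤) (h : s.Pairwise fun X Y => nijenhuis J X Y = 0) :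
    nijenhuis J = 0 := by
  have hs' : ∀ X ∈ s, ∀ Y ∈ s, nijenhuis J X Y = 0 := fun X hX Y hY => by
    rcases eq_or_ne X Y with rfl | hne
    exacts [nijenhuis_self J X, h hX hY hne]
  have hsJ : ∀ X ∈ s ∪ J '' s, ∀ Y ∈ s ∪ J '' s, nijenhuis J X Y = 0 := by
    rintro X (hX | ⟨X, hX, rfl⟩) Y (hY | ⟨Y, hY, rfl⟩) <;>
      simp only [nijenhuis_apply_left hJ, nijenhuis_apply_right hJ, hs' X hX Y hY, map_zero,
        neg_zero]
  refine LinearMap.ext_on hs fun X hX => LinearMap.ext_on hs fun Y hY => ?_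
  simpa using hsJ X hX Y hY

end Nijenhuis

theorem g66_J_integrable_general
    (L : Type*) [LieRing L] [LieAlgebra ℝ L]
    (x : Module.Basis (Fin 6) ℝ L)
    (h12 : ⁅x 1, x 2⁆ = x 5) (h13 : ⁅x 1, x 3⁆ = x 4)
    (h02 : ⁅x 0, x 2⁆ = 0) (h03 : ⁅x 0, x 3⁆ = 0) (h04 : ⁅x 0, x 4⁆ = 0)
    (h05 : ⁅x 0, x 5⁆ = 0) (h14 : ⁅x 1, x 4⁆ = 0) (h15 : ⁅x 1, x 5⁆ = 0)
    (h24 : ⁅x 2, x 4⁆ = 0) (h25 : ⁅x 2, x 5⁆ = 0)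
    (h34 : ⁅x 3, x 4⁆ = 0) (h35 : ⁅x 3, x 5⁆ = 0)
    (J : L →ₗ[ℝ] L)
    (hJ0 : J (x 0) = x 1) (hJ1 : J (x 1) = -x 0)
    (hJ2 : J (x 2) = x 3) (hJ3 : J (x 3) = -x 2)
    (hJ4 : J (x 4) = -x 5) (hJ5 : J (x 5) = x 4) :
    (∀ X : L, J (J X) = -X) ∧
    (∀ X Y : L, ⁅J X, J Y⁆ - ⁅X, Y⁆ - J ⁅J X, Y⁆ - J ⁅X, J Y⁆ = 0) := by
  have hJJ : ∀ X, J (J X) = -X := by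
    have : J ∘ₗ J = -LinearMap.id :=
      x.ext fun i => by fin_cases i <;> simp [hJ0, hJ1, hJ2, hJ3, hJ4, hJ5]
    exact fun X => by simpa using LinearMap.congr_fun this X
  refine ⟨hJJ, fun X Y => ?_⟩
  have hspan : Submodule.span ℝ ({x 0, x 2, x 5} ∪ J '' {x 0, x 2, x 5}) = ⊤ := by
    refine top_le_iff.mp (x.span_eq ▸ Submodule.span_mono ?_)
    rintro _ ⟨i, rfl⟩
    fin_cases i <;> simp [hJ0, hJ2, hJ5]
  have hpair : ({x 0, x 2, x 5} : Set L).Pairwise fun X Y => nijenhuis J X Y = 0 := by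
    have hN02 : nijenhuis J (x 0) (x 2) = 0 := by
      simp [nijenhuis_apply, hJ0, hJ2, hJ5, h02, h03, h12, h13]
    have hN05 : nijenhuis J (x 0) (x 5) = 0 := by
      simp [nijenhuis_apply, hJ0, hJ5, h04, h05, h14, h15]
    have hN25 : nijenhuis J (x 2) (x 5) = 0 := by
      simp [nijenhuis_apply, hJ2, hJ5, h24, h25, h34, h35]
    simp [Set.pairwise_insert, nijenhuis_swap J (x 0) (x 2), nijenhuis_swap J (x 0) (x 5),
      nijenhuis_swap J (x 2) (x 5), hN02, hN05, hN25]
  simpa [nijenhuis_apply] using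
    LinearMap.congr_fun₂ (nijenhuis_eq_zero_of_span hJJ hspan hpair) X Y

/-- On the Lie algebra `𝒢₆,₆` (`[x₁,x₂]=x₄, [x₂,x₃]=x₆, [x₂,x₄]=x₅`), the map `J`
with `Jx₁=x₂, Jx₃=x₄, Jx₅=-x₆` is an integrable almost complex structure. -/
theorem g66_J_integrable
    (L : Type*) [LieRing L] [LieAlgebra ℝ L]
    (x : Module.Basis (Fin 6) ℝ L)
    (h01 : ⁅x 0, x 1⁆ = x 3) (h12 : ⁅x 1, x 2⁆ = x 5) (h13 : ⁅x 1, x 3⁆ = x 4)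
    (h02 : ⁅x 0, x 2⁆ = 0) (h03 : ⁅x 0, x 3⁆ = 0) (h04 : ⁅x 0, x 4⁆ = 0)
    (h05 : ⁅x 0, x 5⁆ = 0) (h14 : ⁅x 1, x 4⁆ = 0) (h15 : ⁅x 1, x 5⁆ = 0)
    (h23 : ⁅x 2, x 3⁆ = 0) (h24 : ⁅x 2, x 4⁆ = 0) (h25 : ⁅x 2, x 5⁆ = 0)
    (h34 : ⁅x 3, x 4⁆ = 0) (h35 : ⁅x 3, x 5⁆ = 0) (h45 : ⁅x 4, x 5⁆ = 0)
    (J : L →ₗ[ℝ] L)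
    (hJ0 : J (x 0) = x 1) (hJ1 : J (x 1) = -x 0)
    (hJ2 : J (x 2) = x 3) (hJ3 : J (x 3) = -x 2)
    (hJ4 : J (x 4) = -x 5) (hJ5 : J (x 5) = x 4) :
    (∀ X : L, J (J X) = -X) ∧
    (∀ X Y : L, ⁅J X, J Y⁆ - ⁅X, Y⁆ - J ⁅J X, Y⁆ - J ⁅X, J Y⁆ = 0) :=
  g66_J_integrable_general L x h12 h13 h02 h03 h04 h05 h14 h15 h24 h25 h34 h35 J hJ0 hJ1 hJ2 hJ3 hJ4
    hJ5
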